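/- arXiv:2311.01763 — 5 statements merged into one kernel-verified Lean document; each statement's English description precedes it below -/
import Mathlib

section
/- Under the flow ∂X/∂t = p̃(𝒦 - λ(t)/(2Ã))N_in with λ(t) = ∫p̃𝒦²ds, the anisotropic length 𝓛(t) = ∫p̃ ds is constant in time: d𝓛/dt = 0. -/
open Real MeasureTheory intervalIntegral

private lemma periodic_deriv'' {f : ℝ → ℝ} {c : ℝ} (hf : ∀ x, f (x + c) = f x) (x : ℝ) :
    deriv f (x + c) = deriv f x := by
  have h : (fun y => f (y + c)) = f := funext hf
  calc deriv f (x + c) = deriv (fun y => f (y + c)) x := (deriv_comp_add_const f c x).symm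
    _ = deriv f x := by rw [h]

private lemma ibp_periodic {f g : ℝ → ℝ} (hf : ContDiff ℝ (⊤ : ℕ∞) f)
    (hg : ContDiff ℝ (⊤ : ℕ∞) g)
    (hfp : ∀ x, f (x + 2*π) = f x) (hgp : ∀ x, g (x + 2*π) = g x) :
    ∫ θ in (0:ℝ)..(2*π), f θ * deriv (deriv g) θ
      = ∫ θ in (0:ℝ)..(2*π), deriv (deriv f) θ * g θ := by
  have hfd : Differentiable ℝ f := hf.differentiable (by simp)
  have hf' : ContDiff ℝ (⊤ : ℕ∞) (deriv f) := (contDiff_infty_iff_deriv.mp hf).2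
  have hf'd : Differentiable ℝ (deriv f) := hf'.differentiable (by simp)
  have hgd : Differentiable ℝ g := hg.differentiable (by simp)
  have hg' : ContDiff ℝ (⊤ : ℕ∞) (deriv g) := (contDiff_infty_iff_deriv.mp hg).2
  have hg'd : Differentiable ℝ (deriv g) := hg'.differentiable (by simp)
  have hg'' : Continuous (deriv (deriv g)) := (contDiff_infty_iff_deriv.mp hg').2.continuous
  have hf'' : Continuous (deriv (deriv f)) := (contDiff_infty_iff_deriv.mp hf').2.continuous
  -- W = f * g' - f' * g
  have hW : ∀ x : ℝ, HasDerivAt (fun θ => f θ * deriv g θ - deriv f θ * g θ)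
      (f x * deriv (deriv g) x - deriv (deriv f) x * g x) x := by
    intro x
    have h1 : HasDerivAt (fun θ => f θ * deriv g θ)
        (deriv f x * deriv g x + f x * deriv (deriv g) x) x :=
      (hfd x).hasDerivAt.mul (hg'd x).hasDerivAt
    have h2 : HasDerivAt (fun θ => deriv f θ * g θ)
        (deriv (deriv f) x * g x + deriv f x * deriv g x) x :=
      (hf'd x).hasDerivAt.mul (hgd x).hasDerivAt
    have := h1.sub h2
    exact this.congr_deriv (by ring)
  have hint : IntervalIntegrable
      (fun x => f x * deriv (deriv g) x - deriv (deriv f) x * g x) volume 0 (2*π) :=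
    ((hf.continuous.mul hg'').sub (hf''.mul hg.continuous)).intervalIntegrable _ _
  have heq : ∫ θ in (0:ℝ)..(2*π), (f θ * deriv (deriv g) θ - deriv (deriv f) θ * g θ)
      = (f (2*π) * deriv g (2*π) - deriv f (2*π) * g (2*π))
        - (f 0 * deriv g 0 - deriv f 0 * g 0) :=
    intervalIntegral.integral_eq_sub_of_hasDerivAt (fun x _ => hW x) hint
  have hfp' : deriv f (2*π) = deriv f 0 := by
    have := periodic_deriv'' hfp 0; simpa using this
  have hgp' : deriv g (2*π) = deriv g 0 := by
    have := periodic_deriv'' hgp 0; simpa using this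
  have hfv : f (2*π) = f 0 := by have := hfp 0; simpa using this
  have hgv : g (2*π) = g 0 := by have := hgp 0; simpa using this
  have hzero : ∫ θ in (0:ℝ)..(2*π), (f θ * deriv (deriv g) θ - deriv (deriv f) θ * g θ) = 0 := by
    rw [heq, hfp', hgp', hfv, hgv]; ring
  have hi1 : IntervalIntegrable (fun θ => f θ * deriv (deriv g) θ) volume 0 (2*π) :=
    (hf.continuous.mul hg'').intervalIntegrable _ _
  have hi2 : IntervalIntegrable (fun θ => deriv (deriv f) θ * g θ) volume 0 (2*π) :=
    (hf''.mul hg.continuous).intervalIntegrable _ _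
  have := intervalIntegral.integral_sub hi1 hi2
  rw [hzero] at this
  linarith [this]

/-- Under the flow ∂X/∂t = p̃(𝒦 - λ(t)/(2Ã))N_in, expressed via the curvature
evolution ∂κ/∂t = κ²[(p̃(𝒦-λ/(2Ã)))_θθ + p̃(𝒦-λ/(2Ã))], the anisotropic length
𝓛(t) = ∫₀^{2π} p̃/κ dθ is constant in time. -/
theorem stmt_8 (pt : ℝ → ℝ) (κ : ℝ → ℝ → ℝ) (Atil : ℝ) (lam L : ℝ → ℝ)
    (hpt : ContDiff ℝ (⊤ : ℕ∞) pt) (hper : ∀ θ, pt (θ + 2*π) = pt θ)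
    (hpos : ∀ θ, 0 < pt θ)
    (hphi : ∀ θ, 0 < deriv (deriv pt) θ + pt θ) (hAtil : 0 < Atil)
    (hκs : ContDiff ℝ (⊤ : ℕ∞) (fun q : ℝ × ℝ => κ q.1 q.2))
    (hκpos : ∀ θ t, 0 < κ θ t)
    (hκper : ∀ θ t, κ (θ + 2*π) t = κ θ t)
    (hlam : ∀ t, lam t = ∫ θ in (0:ℝ)..(2*π),
        pt θ * ((deriv (deriv pt) θ + pt θ) * κ θ t)^2 / κ θ t)
    (hflow : ∀ θ t, deriv (fun s => κ θ s) t
        = (κ θ t)^2 *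
          (deriv (deriv (fun u =>
              pt u * ((deriv (deriv pt) u + pt u) * κ u t - lam t / (2*Atil)))) θ
            + pt θ * ((deriv (deriv pt) θ + pt θ) * κ θ t - lam t / (2*Atil))))
    (hL : ∀ t, L t = ∫ θ in (0:ℝ)..(2*π), pt θ / κ θ t) :
    ∀ t, deriv L t = 0 := by
  have hπ : (0:ℝ) < 2*π := by positivity
  -- basic smoothness facts
  have hptS : ContDiff ℝ (⊤ : ℕ∞) pt := hpt.of_le (by simp)
  have hκS : ContDiff ℝ (⊤ : ℕ∞) (fun q : ℝ × ℝ => κ q.1 q.2) := hκs.of_le (by simp)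
  have hptd : Differentiable ℝ pt := hptS.differentiable (by simp)
  have hpt' : ContDiff ℝ (⊤ : ℕ∞) (deriv pt) := (contDiff_infty_iff_deriv.mp hptS).2
  have hpt'' : ContDiff ℝ (⊤ : ℕ∞) (deriv (deriv pt)) := (contDiff_infty_iff_deriv.mp hpt').2
  have hφ : ContDiff ℝ (⊤ : ℕ∞) (fun θ => deriv (deriv pt) θ + pt θ) := hpt''.add hptS
  have hper' : ∀ θ, deriv pt (θ + 2*π) = deriv pt θ := periodic_deriv'' hper
  have hper'' : ∀ θ, deriv (deriv pt) (θ + 2*π) = deriv (deriv pt) θ := periodic_deriv'' hper'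
  have hκslice : ∀ t, ContDiff ℝ (⊤ : ℕ∞) (fun θ => κ θ t) := fun t =>
    hκS.comp (contDiff_id.prodMk contDiff_const)
  -- the time-derivative of κ
  set κt : ℝ → ℝ → ℝ := fun θ t => fderiv ℝ (fun q : ℝ × ℝ => κ q.1 q.2) (θ, t) (0, 1)
    with hκtdef
  have hκtD : ∀ θ t, HasDerivAt (fun s => κ θ s) (κt θ t) t := by
    intro θ t
    have h1 : HasFDerivAt (fun q : ℝ × ℝ => κ q.1 q.2)
        (fderiv ℝ (fun q : ℝ × ℝ => κ q.1 q.2) (θ, t)) (θ, t) :=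
      (hκS.differentiable (by simp) (θ, t)).hasFDerivAt
    have h2 : HasDerivAt (fun s : ℝ => ((θ : ℝ), s)) (((0 : ℝ), (1 : ℝ))) t :=
      (hasDerivAt_const t θ).prodMk (hasDerivAt_id t)
    exact h1.comp_hasDerivAt t h2
  have hκtc : Continuous (fun q : ℝ × ℝ => κt q.1 q.2) := by
    have h1 : Continuous (fderiv ℝ (fun q : ℝ × ℝ => κ q.1 q.2)) :=
      hκS.continuous_fderiv (by simp)
    have h2 : Continuous (fun q : ℝ × ℝ =>
        fderiv ℝ (fun q : ℝ × ℝ => κ q.1 q.2) q ((0:ℝ), (1:ℝ))) :=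
      h1.clm_apply continuous_const
    exact h2.comp (continuous_fst.prodMk continuous_snd)
  have hκc : Continuous (fun q : ℝ × ℝ => κ q.1 q.2) := hκS.continuous
  have hκslicec : ∀ t, Continuous (fun θ => κ θ t) := fun t => (hκslice t).continuous
  -- the anisotropic quantity I = ∫ p φ
  set I : ℝ := ∫ θ in (0:ℝ)..(2*π), pt θ * (deriv (deriv pt) θ + pt θ) with hIdef
  have hIpos : 0 < I := by
    apply intervalIntegral.intervalIntegral_pos_of_pos_on
    · exact (hptS.continuous.mul hφ.continuous).intervalIntegrable _ _
    · intro x _; exact mul_pos (hpos x) (hphi x)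
    · exact hπ
  -- the derivative of L
  have hLder : ∀ t0 : ℝ, HasDerivAt L (lam t0 * (I / (2*Atil) - 1)) t0 := by
    intro t0
    -- Step 1: differentiate under the integral
    have hcontF' : Continuous (fun q : ℝ × ℝ => -(pt q.1 * κt q.1 q.2) / (κ q.1 q.2)^2) := by
      apply Continuous.div
      · exact ((hptS.continuous.comp continuous_fst).mul hκtc).neg
      · exact hκc.pow 2
      · intro q; exact pow_ne_zero 2 (ne_of_gt (hκpos q.1 q.2))
    obtain ⟨C, hC⟩ : ∃ C, ∀ q ∈ (Set.uIcc (0:ℝ) (2*π)) ×ˢ (Set.Icc (t0-1) (t0+1)),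
        ‖-(pt q.1 * κt q.1 q.2) / (κ q.1 q.2)^2‖ ≤ C :=
      ((isCompact_uIcc).prod isCompact_Icc).exists_bound_of_continuousOn
        hcontF'.continuousOn
    have hderiv : HasDerivAt (fun x => ∫ θ in (0:ℝ)..(2*π), pt θ / κ θ x)
        (∫ θ in (0:ℝ)..(2*π), -(pt θ * κt θ t0) / (κ θ t0)^2) t0 := by
      have := intervalIntegral.hasDerivAt_integral_of_dominated_loc_of_deriv_le
        (F := fun x θ => pt θ / κ θ x)
        (F' := fun x θ => -(pt θ * κt θ x) / (κ θ x)^2)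
        (bound := fun _ => C) (a := 0) (b := 2*π) (x₀ := t0) (s := Metric.ball t0 1) (μ := volume)
        (Metric.ball_mem_nhds t0 one_pos) ?_ ?_ ?_ ?_ ?_ ?_
      · exact this.2
      · filter_upwards with x
        exact (hptS.continuous.div (hκslicec x)
          (fun θ => ne_of_gt (hκpos θ x))).aestronglyMeasurable.restrict
      · exact (hptS.continuous.div (hκslicec t0)
          (fun θ => ne_of_gt (hκpos θ t0))).intervalIntegrable _ _
      · have : Continuous (fun θ => -(pt θ * κt θ t0) / (κ θ t0)^2) :=
          hcontF'.comp (continuous_id.prodMk continuous_const)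
        exact this.aestronglyMeasurable.restrict
      · filter_upwards with θ
        intro hθ x hx
        apply hC (θ, x)
        rw [Set.uIoc_of_le (le_of_lt hπ)] at hθ
        constructor
        · rw [Set.uIcc_of_le (le_of_lt hπ)]
          exact Set.Ioc_subset_Icc_self hθ
        · simp only [Metric.mem_ball, Real.dist_eq] at hx
          have := abs_le.mp hx.le
          exact ⟨by linarith [this.1], by linarith [this.2]⟩
      · exact intervalIntegrable_const
      · filter_upwards with θ
        intro _ x _
        have h1 : HasDerivAt (fun x => κ θ x) (κt θ x) x := hκtD θ x
        have h2 : HasDerivAt (fun x => pt θ / κ θ x)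
            ((0 * κ θ x - pt θ * κt θ x) / (κ θ x)^2) x :=
          (hasDerivAt_const x (pt θ)).div h1 (ne_of_gt (hκpos θ x))
        exact h2.congr_deriv (by ring)
    -- Step 2: identify the value of the derivative
    set G : ℝ → ℝ := fun u =>
      pt u * ((deriv (deriv pt) u + pt u) * κ u t0 - lam t0 / (2*Atil)) with hGdef
    have hG : ContDiff ℝ (⊤ : ℕ∞) G :=
      hptS.mul ((hφ.mul (hκslice t0)).sub contDiff_const)
    have hGper : ∀ u, G (u + 2*π) = G u := by
      intro u
      simp only [hGdef, hper u, hper'' u, hκper u t0]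
    have hG'' : Continuous (deriv (deriv G)) :=
      ((contDiff_infty_iff_deriv.mp (contDiff_infty_iff_deriv.mp hG).2).2).continuous
    have hval1 : (∫ θ in (0:ℝ)..(2*π), -(pt θ * κt θ t0) / (κ θ t0)^2)
        = ∫ θ in (0:ℝ)..(2*π), -(pt θ * (deriv (deriv G) θ + G θ)) := by
      apply intervalIntegral.integral_congr
      intro θ _
      have hf := hflow θ t0
      rw [(hκtD θ t0).deriv] at hf
      have hκne : (κ θ t0) ≠ 0 := ne_of_gt (hκpos θ t0)
      show -(pt θ * κt θ t0) / (κ θ t0)^2 = -(pt θ * (deriv (deriv G) θ + G θ))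
      rw [← hGdef] at hf
      have hGθ : G θ = pt θ * ((deriv (deriv pt) θ + pt θ) * κ θ t0 - lam t0 / (2*Atil)) :=
        rfl
      rw [hf, ← hGθ, div_eq_iff (pow_ne_zero 2 hκne)]
      ring
    have hsplit : (∫ θ in (0:ℝ)..(2*π), -(pt θ * (deriv (deriv G) θ + G θ)))
        = -((∫ θ in (0:ℝ)..(2*π), pt θ * deriv (deriv G) θ)
            + (∫ θ in (0:ℝ)..(2*π), pt θ * G θ)) := by
      have hi1 : IntervalIntegrable (fun θ => pt θ * deriv (deriv G) θ) volume 0 (2*π) :=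
        (hptS.continuous.mul hG'').intervalIntegrable _ _
      have hi2 : IntervalIntegrable (fun θ => pt θ * G θ) volume 0 (2*π) :=
        (hptS.continuous.mul hG.continuous).intervalIntegrable _ _
      rw [← intervalIntegral.integral_add hi1 hi2, ← intervalIntegral.integral_neg]
      apply intervalIntegral.integral_congr
      intro θ _
      ring
    have hibp : (∫ θ in (0:ℝ)..(2*π), pt θ * deriv (deriv G) θ)
        = ∫ θ in (0:ℝ)..(2*π), deriv (deriv pt) θ * G θ :=
      ibp_periodic hptS hG hper hGper
    have hcomb : -((∫ θ in (0:ℝ)..(2*π), deriv (deriv pt) θ * G θ)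
            + (∫ θ in (0:ℝ)..(2*π), pt θ * G θ))
        = -(∫ θ in (0:ℝ)..(2*π), (deriv (deriv pt) θ + pt θ) * G θ) := by
      have hi1 : IntervalIntegrable (fun θ => deriv (deriv pt) θ * G θ) volume 0 (2*π) :=
        (hpt''.continuous.mul hG.continuous).intervalIntegrable _ _
      have hi2 : IntervalIntegrable (fun θ => pt θ * G θ) volume 0 (2*π) :=
        (hptS.continuous.mul hG.continuous).intervalIntegrable _ _
      rw [← intervalIntegral.integral_add hi1 hi2]
      congr 1
      apply intervalIntegral.integral_congr
      intro θ _
      ring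
    have hlamval : lam t0 = ∫ θ in (0:ℝ)..(2*π),
        pt θ * (deriv (deriv pt) θ + pt θ)^2 * κ θ t0 := by
      rw [hlam t0]
      apply intervalIntegral.integral_congr
      intro θ _
      have hκne : (κ θ t0) ≠ 0 := ne_of_gt (hκpos θ t0)
      field_simp
    have hfinal : (∫ θ in (0:ℝ)..(2*π), (deriv (deriv pt) θ + pt θ) * G θ)
        = lam t0 - lam t0 / (2*Atil) * I := by
      have hi1 : IntervalIntegrable
          (fun θ => pt θ * (deriv (deriv pt) θ + pt θ)^2 * κ θ t0) volume 0 (2*π) :=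
        ((hptS.continuous.mul (hφ.continuous.pow 2)).mul (hκslicec t0)).intervalIntegrable _ _
      have hi2 : IntervalIntegrable
          (fun θ => lam t0 / (2*Atil) * (pt θ * (deriv (deriv pt) θ + pt θ))) volume 0 (2*π) :=
        (continuous_const.mul (hptS.continuous.mul hφ.continuous)).intervalIntegrable _ _
      have : (∫ θ in (0:ℝ)..(2*π), (deriv (deriv pt) θ + pt θ) * G θ)
          = ∫ θ in (0:ℝ)..(2*π),
              (pt θ * (deriv (deriv pt) θ + pt θ)^2 * κ θ t0
                - lam t0 / (2*Atil) * (pt θ * (deriv (deriv pt) θ + pt θ))) := by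
        apply intervalIntegral.integral_congr
        intro θ _
        simp only [hGdef]
        ring
      rw [this, intervalIntegral.integral_sub hi1 hi2,
        intervalIntegral.integral_const_mul, ← hlamval, ← hIdef]
    have hLfun : L = fun x => ∫ θ in (0:ℝ)..(2*π), pt θ / κ θ x := funext hL
    rw [hLfun]
    have : (∫ θ in (0:ℝ)..(2*π), -(pt θ * κt θ t0) / (κ θ t0)^2)
        = lam t0 * (I / (2*Atil) - 1) := by
      rw [hval1, hsplit, hibp, hcomb, hfinal]
      ring
    rw [← this]
    exact hderiv
  -- positivity of lam and L
  have hlampos : ∀ t, 0 < lam t := by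
    intro t
    rw [hlam t]
    apply intervalIntegral.intervalIntegral_pos_of_pos_on
    · apply Continuous.intervalIntegrable
      apply Continuous.div
      · exact hptS.continuous.mul ((hφ.continuous.mul (hκslicec t)).pow 2)
      · exact hκslicec t
      · intro θ; exact ne_of_gt (hκpos θ t)
    · intro x _
      have h1 : 0 < (deriv (deriv pt) x + pt x) * κ x t := mul_pos (hphi x) (hκpos x t)
      exact div_pos (mul_pos (hpos x) (pow_pos h1 2)) (hκpos x t)
    · exact hπ
  have hLpos : ∀ t, 0 < L t := by
    intro t
    rw [hL t]
    apply intervalIntegral.intervalIntegral_pos_of_pos_on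
    · exact (hptS.continuous.div (hκslicec t)
        (fun θ => ne_of_gt (hκpos θ t))).intervalIntegrable _ _
    · intro x _
      exact div_pos (hpos x) (hκpos x t)
    · exact hπ
  -- Cauchy–Schwarz: I^2 ≤ lam t * L t
  have hCS : ∀ t, I^2 ≤ lam t * L t := by
    intro t
    set r : ℝ := I / L t with hrdef
    have hLt := hLpos t
    have hpoint : ∀ θ, 2 * r * (pt θ * (deriv (deriv pt) θ + pt θ))
        ≤ pt θ * (deriv (deriv pt) θ + pt θ)^2 * κ θ t + r^2 * (pt θ / κ θ t) := by
      intro θ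
      have hκθ := hκpos θ t
      have hptθ := hpos θ
      have key : 0 ≤ pt θ / κ θ t * ((deriv (deriv pt) θ + pt θ) * κ θ t - r)^2 :=
        mul_nonneg (le_of_lt (div_pos hptθ hκθ)) (sq_nonneg _)
      have expand : pt θ / κ θ t * ((deriv (deriv pt) θ + pt θ) * κ θ t - r)^2
          = pt θ * (deriv (deriv pt) θ + pt θ)^2 * κ θ t + r^2 * (pt θ / κ θ t)
            - 2 * r * (pt θ * (deriv (deriv pt) θ + pt θ)) := by
        field_simp
        ring
      linarith [expand ▸ key]
    have hi1 : IntervalIntegrable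
        (fun θ => 2 * r * (pt θ * (deriv (deriv pt) θ + pt θ))) volume 0 (2*π) :=
      (continuous_const.mul (hptS.continuous.mul hφ.continuous)).intervalIntegrable _ _
    have hi2 : IntervalIntegrable
        (fun θ => pt θ * (deriv (deriv pt) θ + pt θ)^2 * κ θ t
          + r^2 * (pt θ / κ θ t)) volume 0 (2*π) := by
      apply Continuous.intervalIntegrable
      apply Continuous.add
      · exact (hptS.continuous.mul (hφ.continuous.pow 2)).mul (hκslicec t)
      · exact continuous_const.mul (hptS.continuous.div (hκslicec t)
          (fun θ => ne_of_gt (hκpos θ t)))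
    have hmono : (∫ θ in (0:ℝ)..(2*π), 2 * r * (pt θ * (deriv (deriv pt) θ + pt θ)))
        ≤ ∫ θ in (0:ℝ)..(2*π), (pt θ * (deriv (deriv pt) θ + pt θ)^2 * κ θ t
          + r^2 * (pt θ / κ θ t)) :=
      intervalIntegral.integral_mono_on (le_of_lt hπ) hi1 hi2 (fun θ _ => hpoint θ)
    have hlamval : lam t = ∫ θ in (0:ℝ)..(2*π),
        pt θ * (deriv (deriv pt) θ + pt θ)^2 * κ θ t := by
      rw [hlam t]
      apply intervalIntegral.integral_congr
      intro θ _
      have hκne : (κ θ t) ≠ 0 := ne_of_gt (hκpos θ t)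
      field_simp
    have hi3 : IntervalIntegrable
        (fun θ => pt θ * (deriv (deriv pt) θ + pt θ)^2 * κ θ t) volume 0 (2*π) :=
      ((hptS.continuous.mul (hφ.continuous.pow 2)).mul (hκslicec t)).intervalIntegrable _ _
    have hi4 : IntervalIntegrable (fun θ => r^2 * (pt θ / κ θ t)) volume 0 (2*π) :=
      (continuous_const.mul (hptS.continuous.div (hκslicec t)
        (fun θ => ne_of_gt (hκpos θ t)))).intervalIntegrable _ _
    rw [intervalIntegral.integral_add hi3 hi4, intervalIntegral.integral_const_mul,
      intervalIntegral.integral_const_mul, ← hIdef, ← hlamval, ← hL t] at hmono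
    -- hmono : 2 * r * I ≤ lam t + r^2 * L t, with r = I / L t
    have hLne : L t ≠ 0 := ne_of_gt hLt
    rw [hrdef] at hmono
    have h2 : 2 * (I / L t) * I = 2 * I^2 / L t := by field_simp
    have h3 : (I / L t)^2 * L t = I^2 / L t := by field_simp
    rw [h2, h3] at hmono
    have h5 := mul_le_mul_of_nonneg_right hmono hLt.le
    rw [div_mul_cancel₀ _ hLne, add_mul, div_mul_cancel₀ _ hLne] at h5
    linarith
  -- the ODE argument: I/(2*Atil) must equal 1
  have hc : I / (2*Atil) = 1 := by
    by_contra hne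
    rcases lt_or_gt_of_ne hne with hlt | hgt
    · -- c < 1 : L is decreasing too fast forward in time
      set c : ℝ := I / (2*Atil) with hcdef
      set K : ℝ := 2 * (1 - c) * I^2 with hKdef
      have hKpos : 0 < K := by
        apply mul_pos
        · linarith
        · exact pow_pos hIpos 2
      have hf : ∀ t, HasDerivAt (fun t => (L t)^2 + K * t)
          (2 * L t * (lam t * (c - 1)) + K) t := by
        intro t
        have h1 : HasDerivAt (fun t => (L t)^2) (2 * L t * (lam t * (c - 1))) t := by
          have := (hLder t).pow 2
          exact this.congr_deriv (by ring)
        have h2 : HasDerivAt (fun t : ℝ => K * t) K t := by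
          simpa using (hasDerivAt_id t).const_mul K
        exact h1.add h2
      have hdnonpos : ∀ t, deriv (fun t => (L t)^2 + K * t) t ≤ 0 := by
        intro t
        rw [(hf t).deriv]
        have h1 : I^2 ≤ lam t * L t := hCS t
        have h2 : 0 < L t := hLpos t
        have h3 : 0 < lam t := hlampos t
        nlinarith
      have hanti : Antitone (fun t => (L t)^2 + K * t) :=
        antitone_of_deriv_nonpos (fun t => (hf t).differentiableAt) hdnonpos
      have hT : (0:ℝ) ≤ ((L 0)^2 + 1) / K := div_nonneg (by positivity) hKpos.le
      have := hanti hT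
      simp only at this
      have hKT : K * (((L 0)^2 + 1) / K) = (L 0)^2 + 1 := by
        field_simp
      have hLT := sq_nonneg (L (((L 0)^2 + 1) / K))
      nlinarith [this, hKT]
    · -- c > 1 : L is increasing too fast backward in time
      set c : ℝ := I / (2*Atil) with hcdef
      set K : ℝ := 2 * (c - 1) * I^2 with hKdef
      have hKpos : 0 < K := by
        apply mul_pos
        · linarith
        · exact pow_pos hIpos 2
      have hf : ∀ t, HasDerivAt (fun t => (L t)^2 - K * t)
          (2 * L t * (lam t * (c - 1)) - K) t := by
        intro t
        have h1 : HasDerivAt (fun t => (L t)^2) (2 * L t * (lam t * (c - 1))) t := by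
          have := (hLder t).pow 2
          exact this.congr_deriv (by ring)
        have h2 : HasDerivAt (fun t : ℝ => K * t) K t := by
          simpa using (hasDerivAt_id t).const_mul K
        exact h1.sub h2
      have hdnonneg : ∀ t, 0 ≤ deriv (fun t => (L t)^2 - K * t) t := by
        intro t
        rw [(hf t).deriv]
        have h1 : I^2 ≤ lam t * L t := hCS t
        have h2 : 0 < L t := hLpos t
        have h3 : 0 < lam t := hlampos t
        nlinarith
      have hmono : Monotone (fun t => (L t)^2 - K * t) :=
        monotone_of_deriv_nonneg (fun t => (hf t).differentiableAt) hdnonneg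
      have hT : -(((L 0)^2 + 1) / K) ≤ (0:ℝ) :=
        neg_nonpos.mpr (div_nonneg (by positivity) hKpos.le)
      have := hmono hT
      simp only at this
      have hKT : K * (-(((L 0)^2 + 1) / K)) = -((L 0)^2 + 1) := by
        field_simp
      have hLT := sq_nonneg (L (-(((L 0)^2 + 1) / K)))
      nlinarith [this, hKT]
  intro t
  rw [(hLder t).deriv, hc]
  ring
end

section
/- Let X be a convex curve with length L and area A, and suppose the Bonnesen inequality ρL - A - πρ² ≥ 0 holds for all ρ ∈ [r_in, r_out]. Then (L - √(L² - 4πA))/(2π) ≤ r_in ≤ r_out ≤ (L + √(L² - 4πA))/(2π). -/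
open Real

/-- The Bonnesen inequality ρL - A - πρ² ≥ 0 for ρ ∈ [r_in, r_out] forces
(L - √(L²-4πA))/(2π) ≤ r_in ≤ r_out ≤ (L + √(L²-4πA))/(2π). -/
theorem stmt_10 (L A rin rout : ℝ) (hA : 0 < A) (hL : 0 < L)
    (h4 : 4*π*A ≤ L^2) (hr : rin ≤ rout)
    (hB : ∀ ρ, rin ≤ ρ → ρ ≤ rout → ρ*L - A - π*ρ^2 ≥ 0) :
    (L - Real.sqrt (L^2 - 4*π*A))/(2*π) ≤ rin ∧ rin ≤ rout ∧
      rout ≤ (L + Real.sqrt (L^2 - 4*π*A))/(2*π) := by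
  have hπ : (0:ℝ) < π := Real.pi_pos
  set s := Real.sqrt (L^2 - 4*π*A) with hs
  have hs0 : 0 ≤ s := Real.sqrt_nonneg _
  have hs2 : s^2 = L^2 - 4*π*A := Real.sq_sqrt (by linarith)
  have h1 := hB rin le_rfl hr
  have h2 := hB rout hr le_rfl
  have hin : L - s ≤ 2*π*rin := by
    nlinarith [sq_nonneg (2*π*rin - L + s), sq_nonneg (2*π*rin - L)]
  have hout : 2*π*rout ≤ L + s := by
    nlinarith [sq_nonneg (2*π*rout - L - s), sq_nonneg (2*π*rout - L)]
  refine ⟨?_, hr, ?_⟩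
  · rw [div_le_iff₀ (by linarith)]; linarith
  · rw [le_div_iff₀ (by linarith)]; linarith
end

section
/- For a smooth strictly convex closed curve with anisotropic curvature 𝒦 satisfying |𝒦_θ| ≤ C₁ on S¹ and anisotropic length 𝓛, one has 𝒦_max/𝒦_min ≤ exp(C₁𝓛 / min_{S¹}(p̃ϕ)). -/
open Real MeasureTheory intervalIntegral

/-- For a strictly convex closed curve with |𝒦_θ| ≤ C₁ and anisotropic length 𝓛,
one has 𝒦_max/𝒦_min ≤ exp(C₁𝓛 / min(p̃ϕ)). -/

theorem stmt_12 (pt ϕ K : ℝ → ℝ) (C₁ Lcal m Kmax Kmin : ℝ)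
    (hKd : Differentiable ℝ K) (hKpos : ∀ θ, 0 < K θ)
    (hKper : ∀ θ, K (θ + 2*π) = K θ)
    (hgrad : ∀ θ, |deriv K θ| ≤ C₁)
    (hptpos : ∀ θ, 0 < pt θ) (hϕpos : ∀ θ, 0 < ϕ θ)
    (hptc : Continuous pt) (hϕc : Continuous ϕ)
    (hL : Lcal = ∫ θ in (0:ℝ)..(2*π), pt θ * ϕ θ / K θ)
    (hm : IsLeast ((fun θ => pt θ * ϕ θ) '' Set.Icc 0 (2*π)) m)
    (hmax : IsGreatest (K '' Set.Icc 0 (2*π)) Kmax)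
    (hmin : IsLeast (K '' Set.Icc 0 (2*π)) Kmin) :
    Kmax / Kmin ≤ Real.exp (C₁ * Lcal / m) := by
  obtain ⟨⟨θ₀, hθ₀, hmθ⟩, hmlb⟩ := hm
  obtain ⟨⟨θM, hθM, hKM⟩, hMub⟩ := hmax
  obtain ⟨⟨θn, hθn, hKn⟩, hnlb⟩ := hmin
  have hmpos : 0 < m := hmθ ▸ mul_pos (hptpos θ₀) (hϕpos θ₀)
  have hKminpos : 0 < Kmin := hKn ▸ hKpos θn
  have hKmaxpos : 0 < Kmax := hKM ▸ hKpos θM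
  have hC₁ : 0 ≤ C₁ := le_trans (abs_nonneg _) (hgrad 0)
  set g : ℝ → ℝ := fun θ => deriv K θ / K θ with hg
  have hfd : ∀ θ, HasDerivAt (fun θ => Real.log (K θ)) (g θ) θ := fun θ =>
    ((hKd θ).hasDerivAt.log (ne_of_gt (hKpos θ)))
  set a := min θn θM with ha
  set b := max θn θM with hb
  have hab : a ≤ b := min_le_max
  have haI : a ∈ Set.Icc 0 (2*π) := by
    rcases min_choice θn θM with h | h <;> rw [ha, h] <;> assumption
  have hbI : b ∈ Set.Icc 0 (2*π) := by
    rcases max_choice θn θM with h | h <;> rw [hb, h] <;> assumption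
  have hsub : Set.Icc a b ⊆ Set.Icc 0 (2*π) := Set.Icc_subset_Icc haI.1 hbI.2
  have hgm : Measurable g := (measurable_deriv K).div hKd.continuous.measurable
  -- pointwise bound for |g| on [0,2π]
  have hbound : ∀ θ ∈ Set.Icc 0 (2*π), |g θ| ≤ C₁ * (pt θ * ϕ θ / K θ) / m := by
    intro θ hθ
    have hK := hKpos θ
    have hmle : m ≤ pt θ * ϕ θ := hmlb ⟨θ, hθ, rfl⟩
    have h1 : |g θ| = |deriv K θ| / K θ := by
      rw [hg]; simp [abs_div, abs_of_pos hK]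
    have h4 : (1:ℝ) ≤ pt θ * ϕ θ / m := (one_le_div hmpos).mpr hmle
    rw [h1]
    calc |deriv K θ| / K θ ≤ C₁ / K θ := by gcongr; exact hgrad θ
      _ ≤ C₁ / K θ * (pt θ * ϕ θ / m) := le_mul_of_one_le_right (by positivity) h4
      _ = C₁ * (pt θ * ϕ θ / K θ) / m := by ring
  -- integrability of g on [a,b]
  have hgi : IntervalIntegrable g volume a b := by
    rw [intervalIntegrable_iff_integrableOn_Ioc_of_le hab]
    apply Integrable.mono' (integrable_const (C₁ / Kmin))
      (hgm.aestronglyMeasurable.restrict)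
    filter_upwards [ae_restrict_mem measurableSet_Ioc] with θ hθ
    have hθ' : θ ∈ Set.Icc 0 (2*π) := hsub (Set.Ioc_subset_Icc_self hθ)
    have hK := hKpos θ
    have hKmin : Kmin ≤ K θ := hnlb ⟨θ, hθ', rfl⟩
    have h1 : ‖g θ‖ = |deriv K θ| / K θ := by
      rw [hg]; simp [Real.norm_eq_abs, abs_div, abs_of_pos hK]
    rw [h1]
    calc |deriv K θ| / K θ ≤ C₁ / K θ := by gcongr; exact hgrad θ
      _ ≤ C₁ / Kmin := by gcongr
  -- the comparison function h is continuous hence integrable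
  have hKc : Continuous K := hKd.continuous
  have hhc : Continuous (fun θ => C₁ * (pt θ * ϕ θ / K θ) / m) := by
    apply Continuous.div_const
    exact continuous_const.mul ((hptc.mul hϕc).div hKc (fun θ => ne_of_gt (hKpos θ)))
  -- FTC
  have hFTC : ∫ θ in a..b, g θ = Real.log (K b) - Real.log (K a) :=
    integral_eq_sub_of_hasDerivAt (fun x _ => hfd x) hgi
  -- key inequality
  have hkey : Real.log Kmax - Real.log Kmin ≤ C₁ * Lcal / m := by
    have h1 : Real.log Kmax - Real.log Kmin ≤ |Real.log (K b) - Real.log (K a)| := by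
      have : Real.log Kmax - Real.log Kmin = Real.log (K θM) - Real.log (K θn) := by
        rw [hKM, hKn]
      rw [this]
      rcases le_total θn θM with h | h
      · have hae : a = θn := min_eq_left h
        have hbe : b = θM := max_eq_right h
        rw [hae, hbe]; exact le_abs_self _
      · have hae : a = θM := min_eq_right h
        have hbe : b = θn := max_eq_left h
        rw [hae, hbe, abs_sub_comm]; exact le_abs_self _
    have h2 : |Real.log (K b) - Real.log (K a)| ≤ ∫ θ in a..b, |g θ| := by
      rw [← hFTC]
      exact (intervalIntegral.abs_integral_le_integral_abs hab)
    have h3 : (∫ θ in a..b, |g θ|) ≤ ∫ θ in a..b, C₁ * (pt θ * ϕ θ / K θ) / m := by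
      apply intervalIntegral.integral_mono_on hab hgi.abs
        (hhc.intervalIntegrable a b)
      intro θ hθ
      exact hbound θ (hsub hθ)
    have h4 : (∫ θ in a..b, C₁ * (pt θ * ϕ θ / K θ) / m)
        ≤ ∫ θ in (0:ℝ)..(2*π), C₁ * (pt θ * ϕ θ / K θ) / m := by
      apply intervalIntegral.integral_mono_interval haI.1 hab hbI.2
      · filter_upwards [ae_restrict_mem measurableSet_Ioc] with θ hθ
        exact div_nonneg (mul_nonneg hC₁ (div_nonneg
          (mul_nonneg (hptpos θ).le (hϕpos θ).le) (hKpos θ).le)) hmpos.le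
      · exact hhc.intervalIntegrable 0 (2*π)
    have h5 : (∫ θ in (0:ℝ)..(2*π), C₁ * (pt θ * ϕ θ / K θ) / m) = C₁ * Lcal / m := by
      rw [hL]
      rw [intervalIntegral.integral_div, intervalIntegral.integral_const_mul]
    linarith
  calc Kmax / Kmin = Real.exp (Real.log Kmax - Real.log Kmin) := by
        rw [Real.exp_sub, Real.exp_log hKmaxpos, Real.exp_log hKminpos]
    _ ≤ Real.exp (C₁ * Lcal / m) := Real.exp_le_exp.mpr hkey
end

section
/- Let E(t) = 𝓛²/(4A(t)Ã) - 1 where 𝓛 is constant, A(t) is differentiable with A'(t) = -2Ã + (𝓛/(2Ã))∫p̃𝒦²ds and ∫p̃𝒦²ds ≥ Ã𝓛/A, and A(t) ≤ 𝓛²/(4Ã). Then E'(t) ≤ -(8Ã²/𝓛²)E(t), and hence E(t) ≤ E(0)·exp(-8Ã²t/𝓛²); the anisoperimetric deficit decays exponentially. -/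
open Real

/-- The anisoperimetric deficit E(t) = 𝓛²/(4A(t)Ã) - 1 satisfies
E'(t) ≤ -(8Ã²/𝓛²)E(t), hence decays exponentially: E(t) ≤ E(0)e^{-8Ã²t/𝓛²}. -/
theorem stmt_15 (A I E : ℝ → ℝ) (Lcal Atil : ℝ)
    (hL : 0 < Lcal) (hAtil : 0 < Atil)
    (hAd : Differentiable ℝ A) (hApos : ∀ t, 0 < A t)
    (hE : ∀ t, E t = Lcal^2 / (4 * A t * Atil) - 1)
    (hA' : ∀ t, deriv A t = -2*Atil + (Lcal/(2*Atil)) * I t)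
    (hWG : ∀ t, I t ≥ Atil * Lcal / A t)
    (hMink : ∀ t, A t ≤ Lcal^2 / (4*Atil)) :
    (∀ t, 0 ≤ t → deriv E t ≤ -(8*Atil^2/Lcal^2) * E t) ∧
      (∀ t, 0 ≤ t → E t ≤ E 0 * Real.exp (-(8*Atil^2/Lcal^2) * t)) := by
  set c : ℝ := 8*Atil^2/Lcal^2 with hc
  have hEfun : E = fun t => Lcal^2 / (4 * Atil) * (A t)⁻¹ - 1 := by
    funext t
    rw [hE t]
    have := (hApos t).ne'
    field_simp
  have hEderiv : ∀ t, HasDerivAt E (Lcal^2 / (4 * Atil) * (-(deriv A t) / (A t)^2)) t := by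
    intro t
    have hA : HasDerivAt A (deriv A t) t := (hAd t).hasDerivAt
    have h := ((hA.inv (hApos t).ne').const_mul (Lcal^2 / (4 * Atil))).sub_const 1
    rw [hEfun]
    exact h
  have hE0 : ∀ t, 0 ≤ E t := by
    intro t
    have ha := hApos t
    have haL : A t * (4*Atil) ≤ Lcal^2 := (le_div_iff₀ (by positivity)).mp (hMink t)
    rw [hE t, sub_nonneg, le_div_iff₀ (by positivity)]
    nlinarith
  have key : ∀ t, deriv E t ≤ -c * E t := by
    intro t
    have ha := hApos t
    have haL : A t * (4*Atil) ≤ Lcal^2 := (le_div_iff₀ (by positivity)).mp (hMink t)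
    have hA'b : -2*Atil + (Lcal/(2*Atil)) * (Atil*Lcal/(A t)) ≤ deriv A t := by
      rw [hA' t]
      gcongr
      exact hWG t
    rw [(hEderiv t).deriv]
    -- step 1
    have step1 : Lcal^2 / (4 * Atil) * (-(deriv A t) / (A t)^2)
        ≤ -(Lcal^2/(2*(A t)^2)) * E t := by
      have hco : (0:ℝ) < Lcal^2 / (4 * Atil) / (A t)^2 := by positivity
      have h1 : Lcal^2 / (4 * Atil) * (-(deriv A t) / (A t)^2)
          ≤ Lcal^2 / (4 * Atil) * (-(-2*Atil + (Lcal/(2*Atil)) * (Atil*Lcal/(A t))) / (A t)^2) := by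
        gcongr
      refine h1.trans_eq ?_
      rw [hE t]
      field_simp
      ring
    refine step1.trans ?_
    -- step 2 : c ≤ L²/(2a²)
    have hcle : c ≤ Lcal^2/(2*(A t)^2) := by
      rw [hc, div_le_div_iff₀ (by positivity) (by positivity)]
      nlinarith [mul_le_mul haL haL (by positivity : (0:ℝ) ≤ A t * (4*Atil)) (by positivity : (0:ℝ) ≤ Lcal^2)]
    have := mul_le_mul_of_nonneg_right (neg_le_neg hcle) (hE0 t)
    linarith
  refine ⟨fun t _ => key t, fun t ht => ?_⟩
  -- Gronwall
  set g : ℝ → ℝ := fun t => E t * Real.exp (c * t) with hg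
  have hgderiv : ∀ s, HasDerivAt g ((deriv E s + c * E s) * Real.exp (c * s)) s := by
    intro s
    have h1 : HasDerivAt (fun u => Real.exp (c * u)) (Real.exp (c * s) * c) s := by
      simpa using ((hasDerivAt_id s).const_mul c).exp
    have := (hEderiv s).mul h1
    have h2 := (hEderiv s).deriv
    refine this.congr_deriv ?_
    rw [h2]
    ring
  have hmono : AntitoneOn g (Set.Icc 0 t) := by
    apply antitoneOn_of_deriv_nonpos (convex_Icc 0 t)
    · exact Continuous.continuousOn (by
        have : Continuous E := by
          rw [hEfun]
          exact ((continuous_const.mul ((hAd.continuous).inv₀ fun x => (hApos x).ne')).sub continuous_const)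
        exact this.mul (Real.continuous_exp.comp (continuous_const.mul continuous_id)))
    · intro s _
      exact (hgderiv s).differentiableAt.differentiableWithinAt
    · intro s _
      rw [(hgderiv s).deriv]
      have : deriv E s + c * E s ≤ 0 := by
        have := key s
        linarith
      exact mul_nonpos_of_nonpos_of_nonneg this (Real.exp_pos _).le
  have hgt : g t ≤ g 0 := by
    have h0 : (0:ℝ) ∈ Set.Icc 0 t := ⟨le_refl 0, ht⟩
    have h1 : t ∈ Set.Icc 0 t := ⟨ht, le_refl t⟩
    exact hmono h0 h1 ht
  have hg0 : g 0 = E 0 := by simp [hg]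
  have : E t * Real.exp (c * t) ≤ E 0 := by rw [← hg0]; exact hgt
  have hexp : (0:ℝ) < Real.exp (c * t) := Real.exp_pos _
  rw [show -(8*Atil^2/Lcal^2) * t = -(c*t) by rw [hc]; ring, Real.exp_neg]
  calc E t = E t * Real.exp (c*t) * (Real.exp (c*t))⁻¹ := by
        field_simp
    _ ≤ E 0 * (Real.exp (c*t))⁻¹ := by
        apply mul_le_mul_of_nonneg_right this (by positivity)
end

section
/- If a smooth strictly convex closed curve has constant anisotropic curvature 𝒦 ≡ C* and anisotropic length 𝓛(0), then C* = 2Ã/𝓛(0), and its curvature is κ(θ) = (2Ã/𝓛(0))·κ̃(θ); i.e., the curve is a homothety (by factor 𝓛(0)/(2Ã)) of the Wulff shape boundary. -/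
open Real

/-- If a convex curve has constant anisotropic curvature 𝒦 ≡ C* and anisotropic
length 𝓛(0), then C* = 2Ã/𝓛(0) and κ = (2Ã/𝓛(0))κ̃, i.e. the curve is a
homothety of the Wulff shape boundary. -/
theorem stmt_18 (pt : ℝ → ℝ) (Cstar L0 Atil : ℝ)
    (hpt : ContDiff ℝ (⊤ : ℕ∞) pt) (hper : ∀ θ, pt (θ + 2*π) = pt θ)
    (hpos : ∀ θ, 0 < pt θ)
    (hphi : ∀ θ, 0 < deriv (deriv pt) θ + pt θ)
    (hC : 0 < Cstar) (hL0 : 0 < L0)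
    (hAtil : Atil = (1/2) * ∫ θ in (0:ℝ)..(2*π), ((pt θ)^2 - (deriv pt θ)^2))
    (hL : L0 = ∫ θ in (0:ℝ)..(2*π), pt θ * (deriv (deriv pt) θ + pt θ) / Cstar) :
    Cstar = 2*Atil/L0 ∧
      ∀ θ, Cstar / (deriv (deriv pt) θ + pt θ)
        = (2*Atil/L0) * (1 / (deriv (deriv pt) θ + pt θ)) := by
  have hpt' : ContDiff ℝ ((⊤ : ℕ∞) : WithTop ℕ∞) pt := hpt.of_le (by simp)
  have h1 : ContDiff ℝ ((⊤ : ℕ∞) : WithTop ℕ∞) (deriv pt) := (contDiff_infty_iff_deriv.mp hpt').2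
  have h2 : ContDiff ℝ ((⊤ : ℕ∞) : WithTop ℕ∞) (deriv (deriv pt)) := (contDiff_infty_iff_deriv.mp h1).2
  have hd1 : Differentiable ℝ pt := (contDiff_infty_iff_deriv.mp hpt').1
  have hd2 : Differentiable ℝ (deriv pt) := (contDiff_infty_iff_deriv.mp h1).1
  have hc1 : Continuous pt := hpt.continuous
  have hc2 : Continuous (deriv pt) := h1.continuous
  have hc3 : Continuous (deriv (deriv pt)) := h2.continuous
  have hp' : ∀ x, deriv pt (x + 2*π) = deriv pt x := by
    intro x
    have hco : (fun y => pt (y + 2*π)) = pt := funext hper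
    rw [← deriv_comp_add_const pt (2*π) x, hco]
  have hfun : deriv (fun t => pt t * deriv pt t)
      = fun θ => deriv pt θ * deriv pt θ + pt θ * deriv (deriv pt) θ := by
    funext θ
    rw [deriv_fun_mul (hd1 θ) (hd2 θ)]
  have hzero : (∫ θ in (0:ℝ)..(2*π),
      (deriv pt θ * deriv pt θ + pt θ * deriv (deriv pt) θ)) = 0 := by
    have := intervalIntegral.integral_deriv_eq_sub
      (f := fun t => pt t * deriv pt t) (a := 0) (b := 2*π)
      (fun x _ => (hd1 x).mul (hd2 x))
      (by rw [hfun]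
          exact ((hc2.mul hc2).add (hc1.mul hc3)).intervalIntegrable _ _)
    rw [hfun] at this
    rw [this]
    have e1 : pt (2*π) = pt 0 := by simpa using hper 0
    have e2 : deriv pt (2*π) = deriv pt 0 := by simpa using hp' 0
    simp [e1, e2]
  have key : (∫ θ in (0:ℝ)..(2*π), pt θ * (deriv (deriv pt) θ + pt θ)) = 2*Atil := by
    have split : (∫ θ in (0:ℝ)..(2*π), pt θ * (deriv (deriv pt) θ + pt θ))
        = (∫ θ in (0:ℝ)..(2*π), ((pt θ)^2 - (deriv pt θ)^2))
          + ∫ θ in (0:ℝ)..(2*π),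
            (deriv pt θ * deriv pt θ + pt θ * deriv (deriv pt) θ) := by
      rw [← intervalIntegral.integral_add
        (f := fun θ => (pt θ)^2 - (deriv pt θ)^2)
        (g := fun θ => deriv pt θ * deriv pt θ + pt θ * deriv (deriv pt) θ)
        (((hc1.pow 2).sub (hc2.pow 2)).intervalIntegrable _ _)
        (((hc2.mul hc2).add (hc1.mul hc3)).intervalIntegrable _ _)]
      apply intervalIntegral.integral_congr
      intro θ _; ring
    rw [split, hzero, hAtil]; ring
  have hLC : L0 * Cstar = 2 * Atil := by
    have : L0 = (∫ θ in (0:ℝ)..(2*π), pt θ * (deriv (deriv pt) θ + pt θ)) / Cstar := by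
      rw [hL, intervalIntegral.integral_div]
    rw [key] at this
    field_simp at this
    linarith [this]
  have hCeq : Cstar = 2*Atil/L0 := by
    field_simp
    linarith [hLC]
  exact ⟨hCeq, fun θ => by rw [← hCeq]; rw [div_eq_mul_one_div]⟩
end
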